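/- Let a, b, c ∈ ℝ \ {0} and let C ∈ DH[t] be the motion polynomial C = (b²+c²)t² + (2a(c·j + b·k) − 2ε(a²(b·j − c·k) − bc(b·k + c·j)))t + 2bc·i − b² + c² − 2aε((b²−c²)·i + 2bc). If there exists a quadratic polynomial M ∈ ℝ[t] such that the norm polynomial satisfies C·C̄ = M², then a² = b². (Consequently the two factorizations of C into linear factors can only coincide — and Bennett synthesis can only fail — when the underlying hyperboloid is a hyperboloid of revolution.) -/

import Mathlib

open Polynomial
noncomputable section

/-- The dual quaternions: dual numbers over the real quaternions. -/
abbrev DH : Type := DualNumber (Quaternion ℝ)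

/-- Dual quaternion conjugation: the conjugate of `p + εq` is `p̄ + εq̄`. -/
def dconj (h : DH) : DH :=
  TrivSqZeroExt.inl (star (TrivSqZeroExt.fst h)) + TrivSqZeroExt.inr (star (TrivSqZeroExt.snd h))

/-- Coefficientwise conjugation of a dual quaternion polynomial. -/
def pconj (P : Polynomial DH) : Polynomial DH :=
  P.sum fun n a => Polynomial.monomial n (dconj a)

/-- The quaternion unit i. -/
def qi : Quaternion ℝ := ⟨0,1,0,0⟩
/-- The quaternion unit j. -/
def qj : Quaternion ℝ := ⟨0,0,1,0⟩
/-- The quaternion unit k. -/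
def qk : Quaternion ℝ := ⟨0,0,0,1⟩

/-- A dual quaternion polynomial is real if all its coefficients are real scalars. -/
def IsRealPoly (P : Polynomial DH) : Prop :=
  ∃ r : Polynomial ℝ, P = r.map (algebraMap ℝ DH)

/-- The primal part of a dual quaternion polynomial. -/
def primalPart (C : Polynomial DH) : Polynomial (Quaternion ℝ) :=
  C.sum fun n a => Polynomial.monomial n (TrivSqZeroExt.fst a)


/-- The motion polynomial of the line symmetric motion with respect to one family of
rulings of the hyperboloid `x²b²c² + y²a²c² − z²a²b² = a²b²c²`:
`C = (b²+c²)t² + (2a(c·j + b·k) − 2ε(a²(b·j − c·k) − bc(b·k + c·j)))t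
     + 2bc·i − b² + c² − 2aε((b²−c²)·i + 2bc)`. -/
def lineSymC (a b c : ℝ) : Polynomial DH :=
  Polynomial.C (algebraMap ℝ DH (b ^ 2 + c ^ 2)) * X ^ 2 +
  Polynomial.C (TrivSqZeroExt.inl ((2 * a) • (c • qj + b • qk)) -
    TrivSqZeroExt.inr ((2 : ℝ) •
      (a ^ 2 • (b • qj - c • qk) - (b * c) • (b • qk + c • qj)))) * X +
  Polynomial.C (TrivSqZeroExt.inl
      ((2 * b * c) • qi + algebraMap ℝ (Quaternion ℝ) (c ^ 2 - b ^ 2)) -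
    TrivSqZeroExt.inr ((2 * a) •
      ((b ^ 2 - c ^ 2) • qi + algebraMap ℝ (Quaternion ℝ) (2 * b * c))))


/-! Taking primal parts is a ring homomorphism `DH → ℍ` fixing the reals, so it turns
`C·C̄ = M²` into an identity of real polynomials. The primal part of `C·C̄` is the quartic
`s²t⁴ + 2s(2a² + c² − b²)t² + s²` with `s = b² + c²`; its odd coefficients vanish because the linear
coefficient of `C` is a pure quaternion orthogonal to the vector part of the constant one. A square
of a real quadratic `αt² + βt + γ` with `α² = γ² = s² ≠ 0` has `β = 0` and middle coefficient
`2αγ = ±2s²`, so `(2a² + c² − b²)² = s²`, i.e. `4(a² − b²)(a² + c²) = 0`. -/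

open TrivSqZeroExt Quaternion

section QuadraticPolynomial

variable {R : Type*}

theorem quadratic_mul [Semiring R] (p q r p' q' r' : R) :
    (C p * X ^ 2 + C q * X + C r) * (C p' * X ^ 2 + C q' * X + C r') =
      C (p * p') * X ^ 4 + C (p * q' + q * p') * X ^ 3 + C (p * r' + q * q' + r * p') * X ^ 2 +
        C (q * r' + r * q') * X + C (r * r') := by
  simp only [C_mul_X_pow_eq_monomial, C_mul_X_eq_monomial]
  simp only [← monomial_zero_left, monomial_mul_monomial, add_mul, mul_add, map_add]
  abel

theorem exists_eq_quadratic_of_natDegree_le_two [Semiring R] {M : R[X]} (hM : M.natDegree ≤ 2) :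
    ∃ α β γ : R, M = C α * X ^ 2 + C β * X + C γ := by
  refine ⟨M.coeff 2, M.coeff 1, M.coeff 0, ?_⟩
  conv_lhs => rw [as_sum_range_C_mul_X_pow' (p := M) (n := 3) (by omega)]
  simp only [Finset.sum_range_succ, Finset.sum_range_zero, pow_zero, pow_one, mul_one]
  abel

theorem sq_eq_four_mul_sq_of_sq_eq_quartic [CommRing R] [IsDomain R] [NeZero (2 : R)]
    {M : R[X]} (hM : M.natDegree ≤ 2) {p q : R} (hp : p ≠ 0)
    (h : M ^ 2 = C p * X ^ 4 + C q * X ^ 2 + C p) : q ^ 2 = 4 * p ^ 2 := by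
  obtain ⟨α, β, γ, rfl⟩ := exists_eq_quadratic_of_natDegree_le_two hM
  rw [sq, quadratic_mul] at h
  have hcoeff (n : ℕ) := congrArg (coeff · n) h
  simp only [coeff_add, coeff_C_mul_X_pow, coeff_C_mul_X, coeff_C] at hcoeff
  have h4 : α * α = p := by simpa using hcoeff 4
  have h3 : α * β + β * α = 0 := by simpa using hcoeff 3
  have h2 : α * γ + β * β + γ * α = q := by simpa using hcoeff 2
  have h0 : γ * γ = p := by simpa using hcoeff 0
  have hα : α ≠ 0 := by rintro rfl; simp_all
  obtain rfl : β = 0 := by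
    have : (2 * α) * β = 0 := by linear_combination h3
    simpa [hα, two_ne_zero] using this
  linear_combination (-(q + 2 * α * γ)) * h2 + 4 * α * α * h0 + 4 * p * h4

end QuadraticPolynomial

theorem dconj_zero : dconj 0 = 0 := by simp [dconj]

theorem fst_dconj (h : DH) : (dconj h).fst = star h.fst := by simp [dconj]

theorem coeff_pconj (P : Polynomial DH) (n : ℕ) : (pconj P).coeff n = dconj (P.coeff n) := by
  rw [pconj, coeff_sum, sum_def]
  simp only [coeff_monomial]
  rw [Finset.sum_ite_eq' P.support n (fun m => dconj (P.coeff m))]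
  split_ifs with h
  · rfl
  · rw [notMem_support_iff.mp h, dconj_zero]

theorem pconj_quadratic (p q r : DH) :
    pconj (C p * X ^ 2 + C q * X + C r) = C (dconj p) * X ^ 2 + C (dconj q) * X + C (dconj r) := by
  ext n : 1
  rw [coeff_pconj]
  rcases n with _ | _ | _ | n <;> simp [coeff_X, coeff_C, coeff_X_pow, dconj_zero]

theorem map_fst_quadratic (p q r : DH) :
    (C p * X ^ 2 + C q * X + C r).map (fstHom ℝ (Quaternion ℝ) (Quaternion ℝ)) =
      C p.fst * X ^ 2 + C q.fst * X + C r.fst := by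
  simp

def lineSymNorm (a b c : ℝ) : ℝ[X] :=
  C ((b ^ 2 + c ^ 2) ^ 2) * X ^ 4 + C (2 * (b ^ 2 + c ^ 2) * (2 * a ^ 2 + c ^ 2 - b ^ 2)) * X ^ 2 +
    C ((b ^ 2 + c ^ 2) ^ 2)

theorem map_fst_lineSymC_mul_pconj (a b c : ℝ) :
    (lineSymC a b c * pconj (lineSymC a b c)).map (fstHom ℝ (Quaternion ℝ) (Quaternion ℝ)) =
      (lineSymNorm a b c).map (algebraMap ℝ (Quaternion ℝ)) := by
  rw [lineSymC, pconj_quadratic, Polynomial.map_mul, map_fst_quadratic, map_fst_quadratic,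
    quadratic_mul, lineSymNorm]
  simp only [algebraMap_eq_inl', fst_inl, fst_dconj, fst_sub, fst_inr, sub_zero,
    Polynomial.map_add, Polynomial.map_mul, map_C, Polynomial.map_pow, map_X]
  ext n : 1
  simp only [coeff_add, coeff_C_mul_X_pow, coeff_C_mul_X, coeff_C]
  rcases n with _ | _ | _ | _ | _ | n <;> simp
  all_goals ext <;> simp [sq] <;> simp [qi, qj, qk] <;> ring

theorem line_symmetric_norm_square_implies_revolution_general (a b c : ℝ)
    (hc : c ≠ 0)
    (hsq : ∃ M : Polynomial ℝ, M.natDegree = 2 ∧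
      lineSymC a b c * pconj (lineSymC a b c) = (M.map (algebraMap ℝ DH)) ^ 2) :
    a ^ 2 = b ^ 2 := by
  obtain ⟨M, hdeg, hM⟩ := hsq
  have hnorm : M ^ 2 = lineSymNorm a b c := by
    apply map_injective _ (algebraMap ℝ (Quaternion ℝ)).injective
    rw [← map_fst_lineSymC_mul_pconj, hM, Polynomial.map_pow, Polynomial.map_pow, map_map,
      AlgHom.comp_algebraMap]
  have hs : b ^ 2 + c ^ 2 ≠ 0 := by positivity
  have hmiddle := sq_eq_four_mul_sq_of_sq_eq_quartic hdeg.le (pow_ne_zero 2 hs) hnorm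
  have hfactor : (a ^ 2 - b ^ 2) * (a ^ 2 + c ^ 2) = 0 := by
    apply mul_left_cancel₀ (pow_ne_zero 2 hs)
    linear_combination hmiddle / 16
  have hac : a ^ 2 + c ^ 2 ≠ 0 := by positivity
  linear_combination (mul_eq_zero.mp hfactor).resolve_right hac

/-- If the norm polynomial of the line symmetric motion is the square `M²` of a
quadratic real polynomial, then `a² = b²`: the two factorizations of `C` can only
coincide when the hyperboloid is a hyperboloid of revolution. -/
theorem line_symmetric_norm_square_implies_revolution (a b c : ℝ)
    (ha : a ≠ 0) (hb : b ≠ 0) (hc : c ≠ 0)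
    (hsq : ∃ M : Polynomial ℝ, M.natDegree = 2 ∧
      lineSymC a b c * pconj (lineSymC a b c) = (M.map (algebraMap ℝ DH)) ^ 2) :
    a ^ 2 = b ^ 2 :=
  line_symmetric_norm_square_implies_revolution_general a b c hc hsq
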